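/- For every real x, the function g(t) = ln(Φ(t)) is twice differentiable at x and its second derivative satisfies g''(x) = (-x·φ(x)·Φ(x) - φ(x)²) / Φ(x)², and this quantity is strictly negative. -/

import Mathlib

open MeasureTheory Real Filter

/-- The standard normal cumulative distribution function
`Φ(x) = (√(2π))⁻¹ ∫_{-∞}^x exp(-t²/2) dt`. -/
noncomputable def stdNormalCDF (x : ℝ) : ℝ :=
  (Real.sqrt (2 * Real.pi))⁻¹ * ∫ t in Set.Iic x, Real.exp (-t ^ 2 / 2)

/-- The standard normal density `φ(x) = (√(2π))⁻¹ exp(-x²/2)`. -/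
noncomputable def stdNormalPDF (x : ℝ) : ℝ :=
  (Real.sqrt (2 * Real.pi))⁻¹ * Real.exp (-x ^ 2 / 2)

/-! Since `(log Φ)'' = -φ (φ + x Φ) / Φ²`, everything rests on `φ x + x Φ x > 0`.
As `-t φ t = φ' t`, the integral `∫_{-∞}^x (x - t) φ t dt`, of an integrand positive on `(-∞, x)`,
equals `x Φ x + φ x`. -/

open Set

lemma setIntegral_Iic_pos {f : ℝ → ℝ} {x : ℝ} (hf : IntegrableOn f (Iic x))
    (hpos : ∀ t < x, 0 < f t) : 0 < ∫ t in Iic x, f t := by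
  rw [integral_Iic_eq_integral_Iio,
    setIntegral_pos_iff_support_of_nonneg_ae _ (hf.mono_set Iio_subset_Iic_self)]
  · have hsupp : Function.support f ∩ Iio x = Iio x :=
      inter_eq_right.mpr fun t ht => (hpos t ht).ne'
    simp [hsupp, Real.volume_Iio]
  · filter_upwards [ae_restrict_mem measurableSet_Iio] with t ht using (hpos t ht).le

lemma stdNormalPDF_pos (x : ℝ) : 0 < stdNormalPDF x := by
  unfold stdNormalPDF
  positivity

lemma stdNormalPDF_eq_gaussianPDFReal : stdNormalPDF = ProbabilityTheory.gaussianPDFReal 0 1 := by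
  ext x
  simp [stdNormalPDF, ProbabilityTheory.gaussianPDFReal]

lemma integrable_stdNormalPDF : Integrable stdNormalPDF := by
  rw [stdNormalPDF_eq_gaussianPDFReal]
  exact ProbabilityTheory.integrable_gaussianPDFReal 0 1

lemma integrable_neg_mul_stdNormalPDF : Integrable fun t => -t * stdNormalPDF t := by
  have h := (integrable_mul_exp_neg_mul_sq (b := 2⁻¹) (by norm_num)).const_mul
    (-(Real.sqrt (2 * Real.pi))⁻¹)
  refine h.congr (ae_of_all _ fun t => ?_)
  simp only [stdNormalPDF]
  ring_nf

lemma hasDerivAt_stdNormalPDF (x : ℝ) : HasDerivAt stdNormalPDF (-x * stdNormalPDF x) x := by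
  have hexponent : HasDerivAt (fun t : ℝ => -t ^ 2 / 2) (-x) x :=
    (((hasDerivAt_pow 2 x).neg).div_const 2).congr_deriv (by norm_num; ring)
  unfold stdNormalPDF
  exact (hexponent.exp.const_mul _).congr_deriv (by ring)

lemma tendsto_stdNormalPDF_atBot : Tendsto stdNormalPDF atBot (nhds 0) := by
  have hsq : Tendsto (fun t : ℝ => t ^ 2) atBot atTop := by
    simpa only [Function.comp_def, neg_sq] using
      (tendsto_pow_atTop (α := ℝ) two_ne_zero).comp tendsto_neg_atBot_atTop
  have hexponent : Tendsto (fun t : ℝ => -t ^ 2 / 2) atBot atBot :=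
    (tendsto_neg_atTop_atBot.comp hsq).atBot_div_const two_pos
  unfold stdNormalPDF
  rw [← mul_zero (Real.sqrt (2 * Real.pi))⁻¹]
  exact (Real.tendsto_exp_atBot.comp hexponent).const_mul _

lemma stdNormalCDF_eq_integral (x : ℝ) : stdNormalCDF x = ∫ t in Iic x, stdNormalPDF t := by
  simp only [stdNormalCDF, stdNormalPDF, integral_const_mul]

lemma stdNormalCDF_pos (x : ℝ) : 0 < stdNormalCDF x := by
  rw [stdNormalCDF_eq_integral]
  exact setIntegral_Iic_pos integrable_stdNormalPDF.integrableOn fun t _ => stdNormalPDF_pos t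

lemma hasDerivAt_stdNormalCDF (x : ℝ) : HasDerivAt stdNormalCDF (stdNormalPDF x) x := by
  have hsplit : ∀ y, stdNormalCDF y = stdNormalCDF 0 + ∫ t in (0 : ℝ)..y, stdNormalPDF t :=
    fun y => by
      simp only [stdNormalCDF_eq_integral]
      rw [← intervalIntegral.integral_Iic_sub_Iic integrable_stdNormalPDF.integrableOn
        integrable_stdNormalPDF.integrableOn]
      ring
  have hcont : Continuous stdNormalPDF := by
    unfold stdNormalPDF
    fun_prop
  refine (HasDerivAt.const_add _ ?_).congr_of_eventuallyEq (Eventually.of_forall hsplit)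
  exact intervalIntegral.integral_hasDerivAt_right integrable_stdNormalPDF.intervalIntegrable
    hcont.stronglyMeasurable.stronglyMeasurableAtFilter hcont.continuousAt

lemma integral_Iic_neg_mul_stdNormalPDF (x : ℝ) :
    ∫ t in Iic x, -t * stdNormalPDF t = stdNormalPDF x := by
  simpa using integral_Iic_of_hasDerivAt_of_tendsto' (fun t _ => hasDerivAt_stdNormalPDF t)
    integrable_neg_mul_stdNormalPDF.integrableOn tendsto_stdNormalPDF_atBot

lemma integral_Iic_sub_mul_stdNormalPDF (x : ℝ) :
    ∫ t in Iic x, (x - t) * stdNormalPDF t = stdNormalPDF x + x * stdNormalCDF x := by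
  have hsplit : (fun t => (x - t) * stdNormalPDF t) =
      fun t => x * stdNormalPDF t + -t * stdNormalPDF t := by
    funext t
    ring
  rw [hsplit, integral_add (integrable_stdNormalPDF.const_mul x).integrableOn
    integrable_neg_mul_stdNormalPDF.integrableOn, integral_const_mul,
    integral_Iic_neg_mul_stdNormalPDF, stdNormalCDF_eq_integral]
  ring

lemma stdNormalPDF_add_mul_stdNormalCDF_pos (x : ℝ) :
    0 < stdNormalPDF x + x * stdNormalCDF x := by
  rw [← integral_Iic_sub_mul_stdNormalPDF]
  refine setIntegral_Iic_pos ?_ fun t ht => mul_pos (sub_pos.mpr ht) (stdNormalPDF_pos t)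
  refine (((integrable_stdNormalPDF.const_mul x).add
    integrable_neg_mul_stdNormalPDF).congr (ae_of_all _ fun t => ?_)).integrableOn
  simp only [Pi.add_apply]
  ring

lemma hasDerivAt_log_stdNormalCDF (x : ℝ) :
    HasDerivAt (fun t => Real.log (stdNormalCDF t)) (stdNormalPDF x / stdNormalCDF x) x :=
  (hasDerivAt_stdNormalCDF x).log (stdNormalCDF_pos x).ne'

lemma hasDerivAt_stdNormalPDF_div_stdNormalCDF (x : ℝ) :
    HasDerivAt (fun t => stdNormalPDF t / stdNormalCDF t)
      ((-x * stdNormalPDF x * stdNormalCDF x - stdNormalPDF x ^ 2) / stdNormalCDF x ^ 2) x := by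
  refine ((hasDerivAt_stdNormalPDF x).div (hasDerivAt_stdNormalCDF x)
    (stdNormalCDF_pos x).ne').congr_deriv ?_
  ring

/-- `ln ∘ Φ` is twice differentiable at every `x`, with second derivative
`(-x·φ(x)·Φ(x) - φ(x)²)/Φ(x)²`, which is strictly negative. -/
theorem log_stdNormalCDF_second_deriv (x : ℝ) :
    DifferentiableAt ℝ (fun t => Real.log (stdNormalCDF t)) x ∧
    DifferentiableAt ℝ (deriv fun t => Real.log (stdNormalCDF t)) x ∧
    deriv (deriv fun t => Real.log (stdNormalCDF t)) x =
      (-x * stdNormalPDF x * stdNormalCDF x - stdNormalPDF x ^ 2) / stdNormalCDF x ^ 2 ∧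
    (-x * stdNormalPDF x * stdNormalCDF x - stdNormalPDF x ^ 2) / stdNormalCDF x ^ 2 < 0 := by
  have hderiv : (deriv fun t => Real.log (stdNormalCDF t)) =
      fun t => stdNormalPDF t / stdNormalCDF t :=
    funext fun t => (hasDerivAt_log_stdNormalCDF t).deriv
  have hsecond := hasDerivAt_stdNormalPDF_div_stdNormalCDF x
  refine ⟨(hasDerivAt_log_stdNormalCDF x).differentiableAt, hderiv ▸ hsecond.differentiableAt,
    hderiv ▸ hsecond.deriv, ?_⟩
  have hnum : -x * stdNormalPDF x * stdNormalCDF x - stdNormalPDF x ^ 2 =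
      -(stdNormalPDF x * (stdNormalPDF x + x * stdNormalCDF x)) := by ring
  rw [hnum]
  exact div_neg_of_neg_of_pos
    (neg_neg_of_pos (mul_pos (stdNormalPDF_pos x) (stdNormalPDF_add_mul_stdNormalCDF_pos x)))
    (pow_pos (stdNormalCDF_pos x) 2)
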